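/- Let p be a McKay-quiver point. The following are equivalent: (i) there exist nonzero subspaces U, W ⊆ ℂ^Ĝ with ℂ^Ĝ = U ⊕ W such that U and W are each invariant under all the operators X_1, …, X_n and under the G-action; (ii) there exists a nonempty proper subset S ⊆ Ĝ such that both S and its complement Ĝ∖S are p-closed. -/

import Mathlib

/-- A McKay-quiver point. -/
def IsMcKayPt {G : Type*} [CommGroup G] {n : ℕ} (χ : Fin n → (G →* ℂˣ))
    (p : (G →* ℂˣ) → Fin n → ℂ) : Prop :=
  ∀ (ρ : G →* ℂˣ) (j j' : Fin n),
    p (ρ * χ j) j' * p ρ j = p (ρ * χ j') j * p ρ j'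

/-- `S ⊆ Ĝ` is `p`-closed. -/
def PClosed {G : Type*} [CommGroup G] {n : ℕ} (χ : Fin n → (G →* ℂˣ))
    (p : (G →* ℂˣ) → Fin n → ℂ) (S : Set (G →* ℂˣ)) : Prop :=
  ∀ ρ ∈ S, ∀ j : Fin n, p ρ j ≠ 0 → ρ * χ j ∈ S

/-- The operator `X_j` on `ℂ^Ĝ` associated to `p`. -/
noncomputable def Xop {G : Type*} [CommGroup G] {n : ℕ} (χ : Fin n → (G →* ℂˣ))
    (p : (G →* ℂˣ) → Fin n → ℂ) (j : Fin n) :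
    ((G →* ℂˣ) → ℂ) →ₗ[ℂ] ((G →* ℂˣ) → ℂ) where
  toFun v := fun σ => p (σ * (χ j)⁻¹) j * v (σ * (χ j)⁻¹)
  map_add' u v := by funext σ; simp [mul_add]
  map_smul' c v := by funext σ; simp [smul_eq_mul]; ring

/-- The `G`-action operator on `ℂ^Ĝ`: `g • e_ρ = ρ(g) • e_ρ`. -/
noncomputable def Dop {G : Type*} [CommGroup G] (g : G) :
    ((G →* ℂˣ) → ℂ) →ₗ[ℂ] ((G →* ℂˣ) → ℂ) where
  toFun v := fun ρ => ((ρ g : ℂˣ) : ℂ) * v ρ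
  map_add' u v := by funext ρ; simp [mul_add]
  map_smul' c v := by funext ρ; simp [smul_eq_mul]; ring

/-! The `G`-action is diagonal in the basis `(e_ρ)` with pairwise distinct characters, so by
orthogonality of characters a `G`-invariant subspace contains the coordinate projections
`v ρ • e_ρ` of its vectors, and is therefore spanned by the basis vectors it contains. An
invariant decomposition `U ⊕ W` thus splits `Ĝ` into `S = {ρ | e_ρ ∈ U}` and its complement
`{ρ | e_ρ ∈ W}`; as `X_j e_ρ = p(ρ, j) e_{ρ χ_j}`, invariance under the `X_j` is `p`-closedness of
both parts. Conversely, for such `S` the functions vanishing off `S` (`Submodule.pi Sᶜ ⊥`) and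
those vanishing on `S` form the decomposition. -/

namespace Submodule

variable {ι K : Type*} [Field K]

theorem isCompl_pi_bot_compl (S : Set ι) :
    IsCompl (pi S fun _ => (⊥ : Submodule K K)) (pi Sᶜ fun _ => ⊥) := by
  constructor
  · rw [disjoint_def]
    intro v hS hSc
    funext i
    by_cases hi : i ∈ S
    · exact hS i hi
    · exact hSc i hi
  · rw [codisjoint_iff, eq_top_iff']
    intro v
    rw [← S.indicator_self_add_compl v, add_comm]
    exact add_mem_sup (fun i hi => Set.indicator_of_notMem (Set.notMem_compl_iff.mpr hi) v)
      (fun i hi => Set.indicator_of_notMem hi v)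

variable [DecidableEq ι]

theorem single_one_mem_pi_compl_bot {S : Set ι} {i : ι} (hi : i ∈ S) :
    Pi.single i 1 ∈ pi Sᶜ fun _ => (⊥ : Submodule K K) := fun k hk =>
  Pi.single_eq_of_ne (by rintro rfl; exact hk hi) 1

theorem pi_compl_bot_ne_bot {S : Set ι} (hS : S.Nonempty) :
    (pi Sᶜ fun _ => (⊥ : Submodule K K)) ≠ ⊥ :=
  (Submodule.ne_bot_iff _).mpr
    ⟨_, single_one_mem_pi_compl_bot hS.some_mem, Pi.single_eq_zero_iff.not.mpr one_ne_zero⟩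

variable {U W : Submodule K (ι → K)}

theorem single_one_mem_of_single_mem {i : ι} {c : K} (h : Pi.single i c ∈ U) (hc : c ≠ 0) :
    Pi.single i 1 ∈ U := by
  have := U.smul_mem c⁻¹ h
  rwa [← Pi.single_smul', smul_eq_mul, inv_mul_cancel₀ hc] at this

theorem single_one_mem_of_apply_ne_zero (hU : ∀ v ∈ U, ∀ i, Pi.single i (v i) ∈ U)
    {v : ι → K} (hv : v ∈ U) {i : ι} (hi : v i ≠ 0) : Pi.single i 1 ∈ U :=
  single_one_mem_of_single_mem (hU v hv i) hi

theorem setOf_single_one_mem_nonempty (hU : ∀ v ∈ U, ∀ i, Pi.single i (v i) ∈ U)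
    (hU0 : U ≠ ⊥) : {i | Pi.single i (1 : K) ∈ U}.Nonempty := by
  obtain ⟨v, hv, hv0⟩ := (Submodule.ne_bot_iff U).mp hU0
  obtain ⟨i, hi⟩ := Function.ne_iff.mp hv0
  exact ⟨i, single_one_mem_of_apply_ne_zero hU hv hi⟩

theorem compl_setOf_single_one_mem (hUW : IsCompl U W)
    (hU : ∀ v ∈ U, ∀ i, Pi.single i (v i) ∈ U) (hW : ∀ v ∈ W, ∀ i, Pi.single i (v i) ∈ W) :
    {i | Pi.single i (1 : K) ∈ U}ᶜ = {i | Pi.single i 1 ∈ W} := by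
  ext i
  simp only [Set.mem_compl_iff, Set.mem_ofPred_eq]
  constructor
  · intro hiU
    obtain ⟨u, hu, w, hw, huw⟩ := mem_sup.mp (hUW.sup_eq_top ▸ mem_top : Pi.single i 1 ∈ U ⊔ W)
    have hsum : u i + w i = 1 := by simpa using congrFun huw i
    refine single_one_mem_of_apply_ne_zero hW hw fun hwi => hiU ?_
    exact single_one_mem_of_apply_ne_zero hU hu fun hui => by simp [hui, hwi] at hsum
  · intro hiW hiU
    exact Pi.single_eq_zero_iff.not.mpr one_ne_zero (disjoint_def.mp hUW.disjoint _ hiU hiW)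

end Submodule

section McKay

open Submodule

variable {G : Type*} [CommGroup G]

theorem sum_apply_mul_apply_inv [Fintype G] [DecidableEq (G →* ℂˣ)] (σ ρ : G →* ℂˣ) :
    ∑ g : G, ((σ g : ℂˣ) : ℂ) * (((ρ g)⁻¹ : ℂˣ) : ℂ) =
      if σ = ρ then (Fintype.card G : ℂ) else 0 := by
  split_ifs with h
  · simp [h]
  · have hχ : (Units.coeHom ℂ).comp (σ / ρ) ≠ 1 := fun h1 =>
      h (div_eq_one.mp (MonoidHom.ext fun g => Units.ext (by simpa using DFunLike.congr_fun h1 g)))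
    simpa [div_eq_mul_inv] using sum_hom_units_eq_zero _ hχ

theorem Dop_apply (g : G) (v : (G →* ℂˣ) → ℂ) (ρ : G →* ℂˣ) :
    Dop g v ρ = ((ρ g : ℂˣ) : ℂ) * v ρ := rfl

theorem single_apply_eq_smul_sum_Dop [Fintype G] [DecidableEq (G →* ℂˣ)]
    (v : (G →* ℂˣ) → ℂ) (ρ : G →* ℂˣ) :
    Pi.single ρ (v ρ) = (Fintype.card G : ℂ)⁻¹ • ∑ g : G, (((ρ g)⁻¹ : ℂˣ) : ℂ) • Dop g v := by
  funext σ
  have hsum : ∑ g : G, (((ρ g)⁻¹ : ℂˣ) : ℂ) * (((σ g : ℂˣ) : ℂ) * v σ) =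
      (∑ g : G, ((σ g : ℂˣ) : ℂ) * (((ρ g)⁻¹ : ℂˣ) : ℂ)) * v σ := by
    rw [Finset.sum_mul]
    exact Finset.sum_congr rfl fun g _ => by ring
  have hcard : (Fintype.card G : ℂ) ≠ 0 := Nat.cast_ne_zero.mpr Fintype.card_ne_zero
  simp only [Pi.smul_apply, Finset.sum_apply, Dop_apply, smul_eq_mul, hsum,
    sum_apply_mul_apply_inv, Pi.single_apply]
  split_ifs with h
  · rw [h, inv_mul_cancel_left₀ hcard]
  · simp

theorem single_apply_mem_of_Dop_mem [Fintype G] [DecidableEq (G →* ℂˣ)]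
    {U : Submodule ℂ ((G →* ℂˣ) → ℂ)} (hU : ∀ g : G, ∀ x ∈ U, Dop g x ∈ U)
    {v : (G →* ℂˣ) → ℂ} (hv : v ∈ U) (ρ : G →* ℂˣ) : Pi.single ρ (v ρ) ∈ U := by
  rw [single_apply_eq_smul_sum_Dop]
  exact U.smul_mem _ (U.sum_mem fun g _ => U.smul_mem _ (hU g v hv))

theorem Dop_mem_pi_bot (T : Set (G →* ℂˣ)) (g : G) {v : (G →* ℂˣ) → ℂ}
    (hv : v ∈ pi T fun _ => (⊥ : Submodule ℂ ℂ)) :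
    Dop g v ∈ pi T fun _ => (⊥ : Submodule ℂ ℂ) := by
  simp only [mem_pi, mem_bot, Dop_apply] at hv ⊢
  intro σ hσ
  rw [hv σ hσ, mul_zero]

variable {n : ℕ} (χ : Fin n → (G →* ℂˣ)) (p : (G →* ℂˣ) → Fin n → ℂ)

theorem Xop_apply (j : Fin n) (v : (G →* ℂˣ) → ℂ) (σ : G →* ℂˣ) :
    Xop χ p j v σ = p (σ * (χ j)⁻¹) j * v (σ * (χ j)⁻¹) := rfl

theorem Xop_single [DecidableEq (G →* ℂˣ)] (j : Fin n) (ρ : G →* ℂˣ) (c : ℂ) :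
    Xop χ p j (Pi.single ρ c) = Pi.single (ρ * χ j) (p ρ j * c) := by
  funext σ
  rw [Xop_apply]
  by_cases h : σ = ρ * χ j
  · have hσ : σ * (χ j)⁻¹ = ρ := h ▸ mul_inv_cancel_right ρ (χ j)
    rw [hσ]
    simp [h]
  · have h' : σ * (χ j)⁻¹ ≠ ρ := fun he => h (he ▸ (inv_mul_cancel_right σ (χ j)).symm)
    simp [h, h']

theorem pClosed_setOf_single_one_mem [DecidableEq (G →* ℂˣ)]
    {U : Submodule ℂ ((G →* ℂˣ) → ℂ)} (hU : ∀ j : Fin n, ∀ x ∈ U, Xop χ p j x ∈ U) :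
    PClosed χ p {ρ | Pi.single ρ 1 ∈ U} := by
  intro ρ hρ j hpj
  have := hU j _ hρ
  rw [Xop_single, mul_one] at this
  exact single_one_mem_of_single_mem this hpj

theorem Xop_mem_pi_compl_bot {S : Set (G →* ℂˣ)} (hS : PClosed χ p S) (j : Fin n)
    {v : (G →* ℂˣ) → ℂ} (hv : v ∈ pi Sᶜ fun _ => (⊥ : Submodule ℂ ℂ)) :
    Xop χ p j v ∈ pi Sᶜ fun _ => (⊥ : Submodule ℂ ℂ) := by
  simp only [mem_pi, mem_bot, Xop_apply] at hv ⊢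
  intro σ hσ
  by_cases h : σ * (χ j)⁻¹ ∈ S
  · by_contra hpv
    have := hS _ h j (left_ne_zero_of_mul hpv)
    have hσj : σ * (χ j)⁻¹ * χ j = σ := inv_mul_cancel_right σ (χ j)
    exact hσ (hσj ▸ this)
  · rw [hv _ h, mul_zero]

end McKay

theorem stmt11_general {G : Type*} [CommGroup G] [Fintype G] {n : ℕ}
    (χ : Fin n → (G →* ℂˣ))
    (p : (G →* ℂˣ) → Fin n → ℂ) :
    (∃ U W : Submodule ℂ ((G →* ℂˣ) → ℂ),
        U ≠ ⊥ ∧ W ≠ ⊥ ∧ IsCompl U W ∧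
        (∀ j : Fin n, ∀ x ∈ U, Xop χ p j x ∈ U) ∧
        (∀ g : G, ∀ x ∈ U, Dop g x ∈ U) ∧
        (∀ j : Fin n, ∀ x ∈ W, Xop χ p j x ∈ W) ∧
        (∀ g : G, ∀ x ∈ W, Dop g x ∈ W)) ↔
    (∃ S : Set (G →* ℂˣ), S.Nonempty ∧ S ≠ Set.univ ∧
        PClosed χ p S ∧ PClosed χ p Sᶜ) := by
  classical
  constructor
  · rintro ⟨U, W, hU0, hW0, hUW, hUX, hUD, hWX, hWD⟩
    have hUproj : ∀ v ∈ U, ∀ ρ, Pi.single ρ (v ρ) ∈ U := fun _ => single_apply_mem_of_Dop_mem hUD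
    have hWproj : ∀ v ∈ W, ∀ ρ, Pi.single ρ (v ρ) ∈ W := fun _ => single_apply_mem_of_Dop_mem hWD
    have hcompl := Submodule.compl_setOf_single_one_mem hUW hUproj hWproj
    refine ⟨{ρ | Pi.single ρ 1 ∈ U}, Submodule.setOf_single_one_mem_nonempty hUproj hU0, ?_,
      pClosed_setOf_single_one_mem χ p hUX, hcompl ▸ pClosed_setOf_single_one_mem χ p hWX⟩
    exact Set.nonempty_compl.mp (hcompl ▸ Submodule.setOf_single_one_mem_nonempty hWproj hW0)
  · rintro ⟨S, hS, hSuniv, hSp, hScp⟩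
    exact ⟨_, _, Submodule.pi_compl_bot_ne_bot hS,
      Submodule.pi_compl_bot_ne_bot (Set.nonempty_compl.mpr hSuniv),
      Submodule.isCompl_pi_bot_compl Sᶜ, Xop_mem_pi_compl_bot χ p hSp, Dop_mem_pi_bot Sᶜ,
      Xop_mem_pi_compl_bot χ p hScp, Dop_mem_pi_bot Sᶜᶜ⟩

/-- `ℂ^Ĝ` admits a nontrivial direct sum decomposition into subspaces invariant under
all the `X_j` and the `G`-action iff there is a nonempty proper subset `S ⊆ Ĝ` such
that both `S` and its complement are `p`-closed. -/
theorem stmt11 {G : Type*} [CommGroup G] [Fintype G] {n : ℕ} (hn : 1 ≤ n)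
    (χ : Fin n → (G →* ℂˣ))
    (p : (G →* ℂˣ) → Fin n → ℂ) (hp : IsMcKayPt χ p) :
    (∃ U W : Submodule ℂ ((G →* ℂˣ) → ℂ),
        U ≠ ⊥ ∧ W ≠ ⊥ ∧ IsCompl U W ∧
        (∀ j : Fin n, ∀ x ∈ U, Xop χ p j x ∈ U) ∧
        (∀ g : G, ∀ x ∈ U, Dop g x ∈ U) ∧
        (∀ j : Fin n, ∀ x ∈ W, Xop χ p j x ∈ W) ∧
        (∀ g : G, ∀ x ∈ W, Dop g x ∈ W)) ↔
    (∃ S : Set (G →* ℂˣ), S.Nonempty ∧ S ≠ Set.univ ∧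
        PClosed χ p S ∧ PClosed χ p Sᶜ) :=
  stmt11_general χ p
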